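/- Modal satisfaction in relational evidence models is invariant under surjective bounded aggregation-morphisms: if f : W → W' is surjective, preserves and reflects the valuation, and satisfies the forth conditions (for all R ∈ 𝓡 and w, there is R' ∈ 𝓡' with R'[f(w)] ⊆ {f(v) : Rwv}; and Ag wv implies Ag' f(w) f(v)) and the back conditions (for all R' ∈ 𝓡' and w, there is R ∈ 𝓡 with {f(v) : Rwv} ⊆ R'[f(w)]; and if Ag' f(w) v' then there is v with Ag wv and f(v) = v'), then for all formulas φ of the language with p, ¬, ∧, □₀, □, ∀: M,w ⊨ φ iff M', f(w) ⊨ φ. -/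
import Mathlib


/-- Formulas of the static evidence language. -/
inductive EvForm : Type
  | atom : ℕ → EvForm
  | neg : EvForm → EvForm
  | and : EvForm → EvForm → EvForm
  | box0 : EvForm → EvForm
  | box : EvForm → EvForm
  | all : EvForm → EvForm

/-- Truth set of a formula in an (abstracted) REL model given by a family `𝓡` of
evidence relations, an aggregated relation `Ag`, and a valuation `V`. -/
def relSat {W : Type*} (𝓡 : Set (W → W → Prop)) (Ag : W → W → Prop)
    (V : ℕ → Set W) : EvForm → Set W
  | .atom p => V p
  | .neg φ => (relSat 𝓡 Ag V φ)ᶜ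
  | .and φ ψ => relSat 𝓡 Ag V φ ∩ relSat 𝓡 Ag V ψ
  | .box0 φ => {w | ∃ R ∈ 𝓡, ∀ v, R w v → v ∈ relSat 𝓡 Ag V φ}
  | .box φ => {w | ∀ v, Ag w v → v ∈ relSat 𝓡 Ag V φ}
  | .all φ => {_w | ∀ v, v ∈ relSat 𝓡 Ag V φ}

/-- Modal satisfaction is invariant under surjective bounded aggregation-morphisms. -/
theorem bounded_aggregation_morphism_invariance {W W' : Type*}
    (𝓡 : Set (W → W → Prop)) (Ag : W → W → Prop) (V : ℕ → Set W)
    (𝓡' : Set (W' → W' → Prop)) (Ag' : W' → W' → Prop) (V' : ℕ → Set W')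
    (f : W → W') (hsurj : Function.Surjective f)
    (hval : ∀ (p : ℕ) (w : W), w ∈ V p ↔ f w ∈ V' p)
    (forthA : ∀ R ∈ 𝓡, ∀ w : W, ∃ R' ∈ 𝓡',
      ∀ v' : W', R' (f w) v' → ∃ v : W, R w v ∧ f v = v')
    (forthB : ∀ w v : W, Ag w v → Ag' (f w) (f v))
    (backA : ∀ R' ∈ 𝓡', ∀ w : W, ∃ R ∈ 𝓡, ∀ v : W, R w v → R' (f w) (f v))
    (backB : ∀ (w : W) (v' : W'), Ag' (f w) v' → ∃ v : W, Ag w v ∧ f v = v') :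
    ∀ (φ : EvForm) (w : W), w ∈ relSat 𝓡 Ag V φ ↔ f w ∈ relSat 𝓡' Ag' V' φ
  | .atom p, w => hval p w
  | .neg φ, w => by
      simp only [relSat, Set.mem_compl_iff,
        bounded_aggregation_morphism_invariance 𝓡 Ag V 𝓡' Ag' V' f hsurj hval forthA forthB backA backB φ w]
  | .and φ ψ, w => by
      simp only [relSat, Set.mem_inter_iff,
        bounded_aggregation_morphism_invariance 𝓡 Ag V 𝓡' Ag' V' f hsurj hval forthA forthB backA backB φ w,
        bounded_aggregation_morphism_invariance 𝓡 Ag V 𝓡' Ag' V' f hsurj hval forthA forthB backA backB ψ w]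
  | .box0 φ, w => by
      have ih := bounded_aggregation_morphism_invariance 𝓡 Ag V 𝓡' Ag' V' f hsurj hval forthA forthB backA backB φ
      constructor
      · rintro ⟨R, hR, h⟩
        obtain ⟨R', hR', hRR'⟩ := forthA R hR w
        exact ⟨R', hR', fun v' hv' => by
          obtain ⟨v, hv, rfl⟩ := hRR' v' hv'
          exact (ih v).1 (h v hv)⟩
      · rintro ⟨R', hR', h⟩
        obtain ⟨R, hR, hRR'⟩ := backA R' hR' w
        exact ⟨R, hR, fun v hv => (ih v).2 (h (f v) (hRR' v hv))⟩
  | .box φ, w => by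
      have ih := bounded_aggregation_morphism_invariance 𝓡 Ag V 𝓡' Ag' V' f hsurj hval forthA forthB backA backB φ
      constructor
      · intro h v' hv'
        obtain ⟨v, hv, rfl⟩ := backB w v' hv'
        exact (ih v).1 (h v hv)
      · intro h v hv
        exact (ih v).2 (h (f v) (forthB w v hv))
  | .all φ, w => by
      have ih := bounded_aggregation_morphism_invariance 𝓡 Ag V 𝓡' Ag' V' f hsurj hval forthA forthB backA backB φ
      constructor
      · intro h v'
        obtain ⟨v, rfl⟩ := hsurj v'
        exact (ih v).1 (h v)
      · intro h v
        exact (ih v).2 (h (f v))
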